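/- Suppose the equation x'(t) = L(t)x_t is shadowable and C = 𝒮(0) ⊕ 𝒰 with 𝒰 finite-dimensional. Then for each bounded continuous z : [0,∞) → ℝ^d there is a unique bounded continuous x : [-r,∞) → ℝ^d with x_0 ∈ 𝒰, differentiable on [0,∞), satisfying x'(t) = L(t)x_t + z(t) for t ≥ 0; moreover there is a constant A > 0 independent of z with sup_{t≥−r}|x(t)| ≤ A · sup_{t≥0}|z(t)|. -/

import Mathlib

open Set

noncomputable section

/-- The Euclidean state space ℝ^d. -/
abbrev Rd (d : ℕ) : Type := EuclideanSpace ℝ (Fin d)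

/-- The phase space C = C([-r,0], ℝ^d) with the supremum norm. -/
abbrev Ph (d : ℕ) (r : ℝ) : Type := C(Set.Icc (-r) (0:ℝ), Rd d)

/-- The segment x_t ∈ C of a continuous function x : ℝ → ℝ^d, x_t(θ) = x(t+θ). -/
def seg (d : ℕ) (r : ℝ) (x : ℝ → Rd d) (hx : Continuous x) (t : ℝ) : Ph d r :=
  ⟨fun θ => x (t + θ.1), hx.comp (continuous_const.add continuous_subtype_val)⟩

/-- `x` is a solution of x'(t) = L(t)x_t on [s, ∞) (right-hand derivative at s). -/
def IsSol (d : ℕ) (r : ℝ) (L : ℝ → (Ph d r →L[ℝ] Rd d)) (s : ℝ)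
    (x : ℝ → Rd d) (hx : Continuous x) : Prop :=
  ∀ t, s ≤ t → HasDerivWithinAt x (L t (seg d r x hx t)) (Set.Ici s) t

/-- `T` is the solution operator family of x'(t) = L(t)x_t :
for every s ≥ 0 and φ ∈ C there is a solution x on [s,∞) with x_s = φ and x_t = T(t,s)φ. -/
def IsSolOp (d : ℕ) (r : ℝ) (L : ℝ → (Ph d r →L[ℝ] Rd d))
    (T : ℝ → ℝ → (Ph d r →L[ℝ] Ph d r)) : Prop :=
  ∀ s, 0 ≤ s → ∀ φ : Ph d r, ∃ (x : ℝ → Rd d) (hx : Continuous x),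
    IsSol d r L s x hx ∧ seg d r x hx s = φ ∧ ∀ t, s ≤ t → seg d r x hx t = T t s φ

/-- The evolution family property of the solution operators. -/
def Cocycle (d : ℕ) (r : ℝ) (T : ℝ → ℝ → (Ph d r →L[ℝ] Ph d r)) : Prop :=
  (∀ s, 0 ≤ s → T s s = ContinuousLinearMap.id ℝ (Ph d r)) ∧
  ∀ τ t s, 0 ≤ s → s ≤ t → t ≤ τ → T τ s = (T τ t).comp (T t s)

/-- Uniqueness of solutions with a given initial segment at time s. -/
def UniqueSol (d : ℕ) (r : ℝ) (L : ℝ → (Ph d r →L[ℝ] Rd d)) : Prop :=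
  ∀ s, 0 ≤ s → ∀ (x y : ℝ → Rd d) (hx : Continuous x) (hy : Continuous y),
    IsSol d r L s x hx → IsSol d r L s y hy → seg d r x hx s = seg d r y hy s →
    ∀ t, s - r ≤ t → x t = y t

/-- Eq. x'(t) = L(t)x_t is shadowable. -/
def Shadowable (d : ℕ) (r : ℝ) (L : ℝ → (Ph d r →L[ℝ] Rd d)) : Prop :=
  ∀ ε, 0 < ε → ∃ δ, 0 < δ ∧ ∀ (y yd : ℝ → Rd d) (hy : Continuous y),
    ContinuousOn yd (Set.Ici 0) →
    (∀ t, 0 ≤ t → HasDerivWithinAt y (yd t) (Set.Ici 0) t) →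
    (∀ t, 0 ≤ t → ‖yd t - L t (seg d r y hy t)‖ ≤ δ) →
    ∃ (x : ℝ → Rd d) (hx : Continuous x), IsSol d r L 0 x hx ∧
      ∀ t, 0 ≤ t → ‖seg d r x hx t - seg d r y hy t‖ ≤ ε

/-- Eq. x'(t) = L(t)x_t is Hyers–Ulam stable. -/
def HyersUlam (d : ℕ) (r : ℝ) (L : ℝ → (Ph d r →L[ℝ] Rd d)) : Prop :=
  ∃ κ, 0 < κ ∧ ∀ δ, 0 < δ → ∀ (y yd : ℝ → Rd d) (hy : Continuous y),
    ContinuousOn yd (Set.Ici 0) →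
    (∀ t, 0 ≤ t → HasDerivWithinAt y (yd t) (Set.Ici 0) t) →
    (∀ t, 0 ≤ t → ‖yd t - L t (seg d r y hy t)‖ ≤ δ) →
    ∃ (x : ℝ → Rd d) (hx : Continuous x), IsSol d r L 0 x hx ∧
      ∀ t, 0 ≤ t → ‖seg d r x hx t - seg d r y hy t‖ ≤ κ * δ

/-- The stable subspace 𝒮(s) = {φ ∈ C : sup_{t ≥ s} ‖T(t,s)φ‖ < ∞}. -/
def stableSub (d : ℕ) (r : ℝ) (T : ℝ → ℝ → (Ph d r →L[ℝ] Ph d r)) (s : ℝ) :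
    Submodule ℝ (Ph d r) where
  carrier := {φ | ∃ M, ∀ t, s ≤ t → ‖T t s φ‖ ≤ M}
  add_mem' := by
    rintro a b ⟨Ma, hMa⟩ ⟨Mb, hMb⟩
    refine ⟨Ma + Mb, fun t ht => ?_⟩
    calc ‖T t s (a + b)‖ = ‖T t s a + T t s b‖ := by rw [map_add]
    _ ≤ ‖T t s a‖ + ‖T t s b‖ := norm_add_le _ _
    _ ≤ Ma + Mb := add_le_add (hMa t ht) (hMb t ht)
  zero_mem' := ⟨0, fun t ht => by simp⟩
  smul_mem' := by
    rintro c a ⟨Ma, hMa⟩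
    refine ⟨‖c‖ * Ma, fun t ht => ?_⟩
    rw [map_smul]
    have h1 : ‖c • (T t s) a‖ = ‖c‖ * ‖(T t s) a‖ := @norm_smul ℝ (Ph d r) _ _ _ _ c _
    rw [h1]
    exact mul_le_mul_of_nonneg_left (hMa t ht) (norm_nonneg c)

/-- Eq. x'(t) = L(t)x_t admits an exponential dichotomy (with solution operators T). -/
def ExpDich (d : ℕ) (r : ℝ) (T : ℝ → ℝ → (Ph d r →L[ℝ] Ph d r)) : Prop :=
  ∃ (P : ℝ → (Ph d r →L[ℝ] Ph d r)) (D lam : ℝ), 0 < D ∧ 0 < lam ∧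
    (∀ t, 0 ≤ t → (P t).comp (P t) = P t) ∧
    (∀ t s, 0 ≤ s → s ≤ t → (P t).comp (T t s) = (T t s).comp (P s)) ∧
    (∀ t s, 0 ≤ s → s ≤ t →
      Set.BijOn (⇑(T t s)) (LinearMap.ker (P s : Ph d r →ₗ[ℝ] Ph d r) : Set (Ph d r))
        (LinearMap.ker (P t : Ph d r →ₗ[ℝ] Ph d r) : Set (Ph d r))) ∧
    (∀ t s, 0 ≤ s → s ≤ t → ‖(T t s).comp (P s)‖ ≤ D * Real.exp (-lam * (t - s))) ∧
    (∀ t s, 0 ≤ t → t ≤ s → ∀ φ ∈ LinearMap.ker (P t : Ph d r →ₗ[ℝ] Ph d r),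
      ‖φ‖ ≤ D * Real.exp (-lam * (s - t)) * ‖T s t φ‖)

/-!
Solutions of `x' = L(t)x_t + z(t)` exist for every continuous `z` by a contraction argument in a
Bielecki-weighted sup norm, and are determined by their initial segment (Grönwall). Shadowing
turns a rescaled solution, which is a pseudo-solution of the homogeneous equation, into a bounded
solution; subtracting the solution issuing from the `𝒮(0)`-component of its initial segment moves
that segment into `𝒰`. Two bounded solutions starting in `𝒰` differ by a bounded homogeneous
solution starting in `𝒮(0) ∩ 𝒰 = 0`, hence coincide. So the pairs `(z, x)` form a subspace of
`BC(ℝ) × BC(ℝ)` projecting bijectively onto the first factor; it is closed (passing to the limit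
in the integral equation, and using that `𝒰` is finite-dimensional, hence closed), so the open
mapping theorem bounds `‖x‖` by `A ‖z‖`.
-/

open BoundedContinuousFunction

lemma ContinuousOn.continuous_comp_max_Ici {X : Type*} [TopologicalSpace X] {f : ℝ → X}
    {a : ℝ} (hf : ContinuousOn f (Ici a)) : Continuous fun s => f (max s a) :=
  hf.comp_continuous (continuous_id.max continuous_const) fun s => le_max_right s a

theorem hasDerivWithinAt_Ici_iff_eq_integral {E : Type*} [NormedAddCommGroup E]
    [NormedSpace ℝ E] [CompleteSpace E] {x F : ℝ → E} {a : ℝ} (hx : ContinuousOn x (Ici a))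
    (hF : ContinuousOn F (Ici a)) :
    (∀ t, a ≤ t → HasDerivWithinAt x (F t) (Ici a) t) ↔
      ∀ t, a ≤ t → x t = x a + ∫ s in a..t, F s := by
  have hsub : ∀ {t}, a ≤ t → uIcc a t ⊆ Ici a := fun ht => by
    rw [uIcc_of_le ht]; exact Icc_subset_Ici_self
  constructor
  · intro h t ht
    rw [intervalIntegral.integral_eq_sub_of_hasDeriv_right_of_le ht
      (hx.mono Icc_subset_Ici_self)
      (fun s hs => (h s hs.1.le).mono (Ioi_subset_Ici hs.1.le))
      ((hF.mono (hsub ht)).intervalIntegrable)]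
    abel
  · intro h t ht
    have hFc := hF.continuous_comp_max_Ici
    have hint : ∀ u, a ≤ u → ∫ s in a..u, F (max s a) = ∫ s in a..u, F s := fun u hu =>
      intervalIntegral.integral_congr fun s hs => by
        rw [max_eq_left (hsub hu hs)]
    have hd := ((hFc.integral_hasStrictDerivAt a t).hasDerivAt.const_add (x a)).hasDerivWithinAt
      (s := Ici a)
    rw [max_eq_left ht] at hd
    exact hd.congr (fun u hu => by rw [h u hu, hint u hu]) (by rw [h t ht, hint t ht])

theorem eqOn_zero_of_le_mul_integral {g : ℝ → ℝ} {K a b : ℝ} (hg : Continuous g)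
    (hg₀ : ∀ s ∈ Icc a b, 0 ≤ g s) (h : ∀ s ∈ Icc a b, g s ≤ K * ∫ σ in a..s, g σ) :
    EqOn g 0 (Icc a b) := by
  have hG : ∀ u, HasDerivAt (fun u => ∫ σ in a..u, g σ) (g u) u := fun u =>
    (hg.integral_hasStrictDerivAt a u).hasDerivAt
  have hG₀ : ∀ u ∈ Icc a b, 0 ≤ ∫ σ in a..u, g σ := fun u hu =>
    intervalIntegral.integral_nonneg hu.1 fun s hs => hg₀ s ⟨hs.1, hs.2.trans hu.2⟩
  have hGz : ∀ u ∈ Icc a b, ∫ σ in a..u, g σ = 0 :=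
    eq_zero_of_abs_deriv_le_mul_abs_self_of_eq_zero_right
      (fun u _ => (hG u).continuousAt.continuousWithinAt)
      (fun u _ => (hG u).hasDerivWithinAt) (by simp) fun u hu => by
        rw [Real.norm_of_nonneg (hg₀ u (Ico_subset_Icc_self hu)),
          Real.norm_of_nonneg (hG₀ u (Ico_subset_Icc_self hu))]
        exact h u (Ico_subset_Icc_self hu)
  intro s hs
  exact le_antisymm (by simpa [hGz s hs] using h s hs) (hg₀ s hs)

theorem exists_norm_snd_le_of_isClosed {𝕜 E F : Type*} [NontriviallyNormedField 𝕜]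
    [NormedAddCommGroup E] [NormedSpace 𝕜 E] [CompleteSpace E] [NormedAddCommGroup F]
    [NormedSpace 𝕜 F] [CompleteSpace F] (G : Submodule 𝕜 (E × F))
    (hG : IsClosed (G : Set (E × F))) (h : ∀ x, ∃! y, (x, y) ∈ G) :
    ∃ C, 0 < C ∧ ∀ p ∈ G, ‖p.2‖ ≤ C * ‖p.1‖ := by
  have : CompleteSpace G := hG.completeSpace_coe
  let f : G →L[𝕜] E := (ContinuousLinearMap.fst 𝕜 E F).comp G.subtypeL
  have hinj : f.ker = ⊥ := by
    refine LinearMap.ker_eq_bot'.2 fun ⟨p, hp⟩ hp₀ => ?_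
    have h₁ : p.1 = 0 := hp₀
    have h₂ : p.2 = 0 := (h 0).unique (h₁ ▸ hp) G.zero_mem
    exact Subtype.ext (Prod.ext h₁ h₂)
  have hsurj : f.range = ⊤ :=
    LinearMap.range_eq_top.2 fun x => ⟨⟨(x, _), (h x).exists.choose_spec⟩, rfl⟩
  let e := ContinuousLinearEquiv.ofBijective f hinj hsurj
  refine ⟨‖(e.symm : E →L[𝕜] G)‖ + 1, by positivity, fun p hp => ?_⟩
  have he : e.symm p.1 = ⟨p, hp⟩ := e.symm_apply_eq.2 rfl
  calc ‖p.2‖ ≤ ‖(⟨p, hp⟩ : G)‖ := norm_snd_le p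
    _ = ‖(e.symm : E →L[𝕜] G) p.1‖ := by rw [ContinuousLinearEquiv.coe_coe, he]
    _ ≤ ‖(e.symm : E →L[𝕜] G)‖ * ‖p.1‖ := ContinuousLinearMap.le_opNorm _ _
    _ ≤ (‖(e.symm : E →L[𝕜] G)‖ + 1) * ‖p.1‖ := by gcongr; linarith

section BieleckiWeight

variable {k : ℝ → ℝ}

/-- Since `E' = 2 k E`, the weight satisfies `∫₀ᵗ k E ≤ E t / 2`: this is what makes the
weighted Picard map below a contraction with constant `1/2`. -/
def bieleckiWeight (k : ℝ → ℝ) (t : ℝ) : ℝ := Real.exp (2 * ∫ s in (0:ℝ)..t, k s)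

lemma bieleckiWeight_pos (k : ℝ → ℝ) (t : ℝ) : 0 < bieleckiWeight k t := Real.exp_pos _

lemma bieleckiWeight_zero (k : ℝ → ℝ) : bieleckiWeight k 0 = 1 := by simp [bieleckiWeight]

lemma hasDerivAt_bieleckiWeight (hk : Continuous k) (t : ℝ) :
    HasDerivAt (bieleckiWeight k) (bieleckiWeight k t * (2 * k t)) t :=
  ((hk.integral_hasStrictDerivAt 0 t).hasDerivAt.const_mul 2).exp

lemma continuous_bieleckiWeight (hk : Continuous k) : Continuous (bieleckiWeight k) :=
  continuous_iff_continuousAt.2 fun t => (hasDerivAt_bieleckiWeight hk t).continuousAt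

lemma monotone_bieleckiWeight (hk : Continuous k) (hk₀ : ∀ s, 0 ≤ k s) :
    Monotone (bieleckiWeight k) :=
  monotone_of_deriv_nonneg (fun t => (hasDerivAt_bieleckiWeight hk t).differentiableAt)
    fun t => by
      rw [(hasDerivAt_bieleckiWeight hk t).deriv]
      have := bieleckiWeight_pos k t
      have := hk₀ t
      positivity

lemma one_le_bieleckiWeight (hk : Continuous k) (hk₀ : ∀ s, 0 ≤ k s) {t : ℝ} (ht : 0 ≤ t) :
    1 ≤ bieleckiWeight k t :=
  (bieleckiWeight_zero k).symm.le.trans (monotone_bieleckiWeight hk hk₀ ht)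

lemma integral_mul_bieleckiWeight (hk : Continuous k) (t : ℝ) :
    ∫ s in (0:ℝ)..t, k s * bieleckiWeight k s = (bieleckiWeight k t - 1) / 2 := by
  rw [intervalIntegral.integral_eq_sub_of_hasDerivAt (f := fun s => bieleckiWeight k s / 2)
    (f' := fun s => k s * bieleckiWeight k s)
    (fun s _ => ((hasDerivAt_bieleckiWeight hk s).div_const 2).congr_deriv (by ring))
    ((hk.mul (continuous_bieleckiWeight hk)).intervalIntegrable _ _), bieleckiWeight_zero]
  ring

lemma norm_inv_bieleckiWeight_smul_integral_le {F : Type*} [NormedAddCommGroup F]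
    [NormedSpace ℝ F] (hk : Continuous k) {v : ℝ → F} {c : ℝ}
    (hc : 0 ≤ c) (hvc : ∀ s, 0 ≤ s → ‖v s‖ ≤ c * (k s * bieleckiWeight k s)) (t : ℝ) :
    ‖(bieleckiWeight k t)⁻¹ • ∫ s in (0:ℝ)..max t 0, v s‖ ≤ c / 2 := by
  have hE := bieleckiWeight_pos k t
  rcases le_total 0 t with ht | ht
  · rw [max_eq_left ht, norm_smul, Real.norm_of_nonneg (inv_nonneg.2 hE.le),
      inv_mul_le_iff₀ hE]
    calc ‖∫ s in (0:ℝ)..t, v s‖ ≤ ∫ s in (0:ℝ)..t, c * (k s * bieleckiWeight k s) :=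
          intervalIntegral.norm_integral_le_of_norm_le ht
            (Filter.Eventually.of_forall fun s hs => hvc s hs.1.le)
            (((hk.mul (continuous_bieleckiWeight hk)).const_mul c).intervalIntegrable _ _)
      _ = c * ((bieleckiWeight k t - 1) / 2) := by
          rw [intervalIntegral.integral_const_mul, integral_mul_bieleckiWeight hk]
      _ ≤ bieleckiWeight k t * (c / 2) := by nlinarith
  · simp only [max_eq_right ht, intervalIntegral.integral_same, smul_zero, norm_zero]
    positivity

end BieleckiWeight

section Segments

variable {d : ℕ} {r : ℝ}

lemma continuous_seg_uncurry {X : Type*} [TopologicalSpace X] {f : X → ℝ → Rd d}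
    (hf : Continuous (Function.uncurry f)) :
    Continuous fun q : X × ℝ => seg d r (f q.1) (hf.uncurry_left q.1) q.2 :=
  (ContinuousMap.curry ⟨fun p : (X × ℝ) × Icc (-r) (0:ℝ) => f p.1.1 (p.1.2 + p.2.1),
    hf.comp ((continuous_fst.comp continuous_fst).prodMk ((continuous_snd.comp continuous_fst).add
      (continuous_subtype_val.comp continuous_snd)))⟩).continuous

lemma continuous_seg {x : ℝ → Rd d} (hx : Continuous x) :
    Continuous fun t => seg d r x hx t :=
  (continuous_seg_uncurry (f := fun (_ : Unit) => x) (hx.comp continuous_snd)).comp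
    (Continuous.prodMk_right ())

lemma norm_seg_le {x : ℝ → Rd d} (hx : Continuous x) {t C : ℝ} (hC : 0 ≤ C)
    (h : ∀ τ, t - r ≤ τ → τ ≤ t → ‖x τ‖ ≤ C) : ‖seg d r x hx t‖ ≤ C :=
  (ContinuousMap.norm_le _ hC).2 fun θ => h _ (by linarith [θ.2.1]) (by linarith [θ.2.2])

lemma norm_le_norm_seg {x : ℝ → Rd d} (hx : Continuous x) {t τ : ℝ} (h₁ : t - r ≤ τ)
    (h₂ : τ ≤ t) : ‖x τ‖ ≤ ‖seg d r x hx t‖ := by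
  simpa [seg] using (seg d r x hx t).norm_coe_le_norm ⟨τ - t, by linarith, by linarith⟩

lemma norm_le_of_norm_seg_le (hr : 0 ≤ r) {x : ℝ → Rd d} (hx : Continuous x) {M : ℝ}
    (h : ∀ t, 0 ≤ t → ‖seg d r x hx t‖ ≤ M) {τ : ℝ} (hτ : -r ≤ τ) : ‖x τ‖ ≤ M := by
  refine (norm_le_norm_seg hx (t := max τ 0) ?_ (le_max_left _ _)).trans
    (h _ (le_max_right _ _))
  rcases le_total τ 0 with h0 | h0 <;> simp [h0] <;> linarith

lemma seg_congr {x y : ℝ → Rd d} (hx : Continuous x) (hy : Continuous y) {t : ℝ}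
    (h : ∀ τ, t - r ≤ τ → τ ≤ t → x τ = y τ) : seg d r x hx t = seg d r y hy t :=
  ContinuousMap.ext fun θ => h _ (by linarith [θ.2.1]) (by linarith [θ.2.2])

lemma seg_add {x y : ℝ → Rd d} (hx : Continuous x) (hy : Continuous y) (t : ℝ) :
    seg d r (x + y) (hx.add hy) t = seg d r x hx t + seg d r y hy t := rfl

lemma seg_sub {x y : ℝ → Rd d} (hx : Continuous x) (hy : Continuous y) (t : ℝ) :
    seg d r (x - y) (hx.sub hy) t = seg d r x hx t - seg d r y hy t := rfl

lemma seg_smul (c : ℝ) {x : ℝ → Rd d} (hx : Continuous x) (t : ℝ) :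
    seg d r (c • x) (hx.const_smul c) t = c • seg d r x hx t := rfl

end Segments

section ForcedSolutions

variable {d : ℕ} {r : ℝ}

def IsForcedSol (L : ℝ → (Ph d r →L[ℝ] Rd d)) (z x : ℝ → Rd d) (hx : Continuous x) : Prop :=
  ∀ t, 0 ≤ t → HasDerivWithinAt x (L t (seg d r x hx t) + z t) (Ici 0) t

variable {L : ℝ → (Ph d r →L[ℝ] Rd d)} {z w x y : ℝ → Rd d} {hx : Continuous x}
  {hy : Continuous y}

lemma isForcedSol_zero_iff : IsForcedSol L 0 x hx ↔ IsSol d r L 0 x hx := by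
  simp [IsForcedSol, IsSol]

lemma isForcedSol_zero : IsForcedSol L 0 0 continuous_const := fun t _ => by
  rw [show seg d r (0 : ℝ → Rd d) continuous_const t = 0 from rfl, map_zero, Pi.zero_apply,
    add_zero]
  exact hasDerivWithinAt_const _ _ _

lemma IsForcedSol.add (h₁ : IsForcedSol L z x hx) (h₂ : IsForcedSol L w y hy) :
    IsForcedSol L (z + w) (x + y) (hx.add hy) := fun t ht => by
  refine ((h₁ t ht).add (h₂ t ht)).congr_deriv ?_
  rw [seg_add hx hy, map_add, Pi.add_apply]
  abel

lemma IsForcedSol.sub (h₁ : IsForcedSol L z x hx) (h₂ : IsForcedSol L w y hy) :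
    IsForcedSol L (z - w) (x - y) (hx.sub hy) := fun t ht => by
  refine ((h₁ t ht).sub (h₂ t ht)).congr_deriv ?_
  rw [seg_sub hx hy, map_sub, Pi.sub_apply]
  abel

lemma IsForcedSol.const_smul (h : IsForcedSol L z x hx) (c : ℝ) :
    IsForcedSol L (c • z) (c • x) (hx.const_smul c) := fun t ht => by
  refine ((h t ht).const_smul c).congr_deriv ?_
  rw [seg_smul, map_smul, Pi.smul_apply, smul_add]

lemma IsForcedSol.congr_forcing (h : IsForcedSol L z x hx) (hzw : ∀ t, 0 ≤ t → z t = w t) :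
    IsForcedSol L w x hx := fun t ht => hzw t ht ▸ h t ht

lemma IsForcedSol.congr (hr : 0 ≤ r) (h : IsForcedSol L z x hx)
    (hxy : ∀ τ, -r ≤ τ → x τ = y τ) : IsForcedSol L z y hy := fun t ht => by
  rw [← seg_congr hx hy fun τ h₁ _ => hxy τ (by linarith)]
  exact (h t ht).congr (fun u hu => (hxy u (by linarith [mem_Ici.1 hu])).symm)
    (hxy t (by linarith)).symm

lemma isForcedSol_iff_eq_integral (hL : ContinuousOn L (Ici 0)) (hz : ContinuousOn z (Ici 0)) :
    IsForcedSol L z x hx ↔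
      ∀ t, 0 ≤ t → x t = x 0 + ∫ s in (0:ℝ)..t, (L s (seg d r x hx s) + z s) :=
  hasDerivWithinAt_Ici_iff_eq_integral hx.continuousOn
    ((hL.clm_apply (continuous_seg hx).continuousOn).add hz)

end ForcedSolutions

section Uniqueness

variable {d : ℕ} {r : ℝ} {L : ℝ → (Ph d r →L[ℝ] Rd d)} {T : ℝ → ℝ → (Ph d r →L[ℝ] Ph d r)}
  {z x y : ℝ → Rd d} {hx : Continuous x} {hy : Continuous y}

/-- Grönwall's inequality for `u ↦ ∫₀ᵘ ‖x_s‖ ds`. -/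
lemma IsSol.eq_zero_of_seg_eq_zero (hr : 0 ≤ r) (hL : ContinuousOn L (Ici 0))
    (hxs : IsSol d r L 0 x hx) (h₀ : seg d r x hx 0 = 0) : ∀ t, -r ≤ t → x t = 0 := by
  have hinit : ∀ τ, -r ≤ τ → τ ≤ 0 → x τ = 0 := fun τ h₁ h₂ => by
    simpa [seg] using congr($h₀ ⟨τ, h₁, h₂⟩)
  have hint := (isForcedSol_iff_eq_integral hL continuousOn_const).1
    (isForcedSol_zero_iff.2 hxs)
  intro t ht
  rcases le_or_gt t 0 with ht₀ | ht₀
  · exact hinit t ht ht₀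
  obtain ⟨K, hK⟩ := isCompact_Icc.exists_bound_of_continuousOn (f := L)
    (hL.mono (Icc_subset_Ici_self : Icc 0 t ⊆ Ici 0))
  have hK₀ : 0 ≤ K := (norm_nonneg _).trans (hK 0 ⟨le_rfl, ht₀.le⟩)
  set g : ℝ → ℝ := fun s => ‖seg d r x hx s‖
  have hg : Continuous g := (continuous_seg hx).norm
  have hxle : ∀ τ ∈ Icc 0 t, ‖x τ‖ ≤ K * ∫ s in (0:ℝ)..τ, g s := fun τ hτ => by
    rw [hint τ hτ.1, hinit 0 (neg_nonpos.2 hr) le_rfl, zero_add,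
      ← intervalIntegral.integral_const_mul]
    refine intervalIntegral.norm_integral_le_of_norm_le hτ.1
      (Filter.Eventually.of_forall fun s hs => ?_) ((hg.const_mul K).intervalIntegrable _ _)
    simpa using ((L s).le_opNorm _).trans
      (mul_le_mul_of_nonneg_right (hK s ⟨hs.1.le, hs.2.trans hτ.2⟩) (norm_nonneg _))
  have hgz : ∀ s ∈ Icc 0 t, g s = 0 :=
    eqOn_zero_of_le_mul_integral hg (fun _ _ => norm_nonneg _) fun s hs => by
      refine norm_seg_le hx (mul_nonneg hK₀ (intervalIntegral.integral_nonneg hs.1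
        fun _ _ => norm_nonneg _)) fun τ h₁ h₂ => ?_
      rcases le_or_gt τ 0 with hτ | hτ
      · rw [hinit τ (by linarith [hs.1]) hτ, norm_zero]
        exact mul_nonneg hK₀ (intervalIntegral.integral_nonneg hs.1 fun _ _ => norm_nonneg _)
      refine (hxle τ ⟨hτ.le, h₂.trans hs.2⟩).trans (mul_le_mul_of_nonneg_left ?_ hK₀)
      exact intervalIntegral.integral_mono_interval le_rfl hτ.le h₂
        (Filter.Eventually.of_forall fun _ => norm_nonneg _) (hg.intervalIntegrable _ _)
  have hzero : ∫ s in (0:ℝ)..t, g s = 0 := by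
    rw [intervalIntegral.integral_congr (g := fun _ => (0:ℝ)) fun s hs => hgz s
      (by rwa [uIcc_of_le ht₀.le] at hs)]
    simp
  simpa [hzero] using hxle t ⟨ht₀.le, le_rfl⟩

lemma IsForcedSol.eq_of_seg_eq (hr : 0 ≤ r) (hL : ContinuousOn L (Ici 0))
    (hxs : IsForcedSol L z x hx) (hys : IsForcedSol L z y hy)
    (h₀ : seg d r x hx 0 = seg d r y hy 0) :
    ∀ t, -r ≤ t → x t = y t := by
  have hd := hxs.sub hys
  rw [sub_self] at hd
  exact fun t ht => sub_eq_zero.1 <| (isForcedSol_zero_iff.1 hd).eq_zero_of_seg_eq_zero hr hL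
    (by rw [seg_sub hx hy, h₀, sub_self]) t ht

lemma IsSol.seg_eq_solOp (hr : 0 ≤ r) (hL : ContinuousOn L (Ici 0)) (hT : IsSolOp d r L T)
    (hxs : IsSol d r L 0 x hx) :
    ∀ t, 0 ≤ t → seg d r x hx t = T t 0 (seg d r x hx 0) := by
  obtain ⟨v, hv, hvs, hv₀, hvT⟩ := hT 0 le_rfl (seg d r x hx 0)
  have hxv :=
    (isForcedSol_zero_iff.2 hxs).eq_of_seg_eq hr hL (isForcedSol_zero_iff.2 hvs) hv₀.symm
  intro t ht
  rw [← hvT t ht]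
  exact seg_congr hx hv fun τ h₁ _ => hxv τ (by linarith)

lemma IsSol.seg_mem_stableSub (hr : 0 ≤ r) (hL : ContinuousOn L (Ici 0))
    (hT : IsSolOp d r L T) (hxs : IsSol d r L 0 x hx)
    {M : ℝ} (hM : ∀ τ, -r ≤ τ → ‖x τ‖ ≤ M) : seg d r x hx 0 ∈ stableSub d r T 0 :=
  ⟨max M 0, fun t ht => hxs.seg_eq_solOp hr hL hT t ht ▸ norm_seg_le hx (le_max_right _ _)
    fun τ h₁ _ => (hM τ (by linarith)).trans (le_max_left _ _)⟩

lemma IsForcedSol.eq_of_seg_mem (hr : 0 ≤ r) (hL : ContinuousOn L (Ici 0))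
    (hT : IsSolOp d r L T) {U : Submodule ℝ (Ph d r)}
    (hSU : Disjoint (stableSub d r T 0) U) (hxs : IsForcedSol L z x hx)
    (hys : IsForcedSol L z y hy) (hxU : seg d r x hx 0 ∈ U) (hyU : seg d r y hy 0 ∈ U)
    {Mx My : ℝ} (hMx : ∀ τ, -r ≤ τ → ‖x τ‖ ≤ Mx) (hMy : ∀ τ, -r ≤ τ → ‖y τ‖ ≤ My) :
    ∀ t, -r ≤ t → x t = y t := by
  have hd := hxs.sub hys
  rw [sub_self] at hd
  have hS := (isForcedSol_zero_iff.1 hd).seg_mem_stableSub hr hL hT (M := Mx + My)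
    fun τ hτ => (norm_sub_le _ _).trans (add_le_add (hMx τ hτ) (hMy τ hτ))
  have hU : seg d r (x - y) (hx.sub hy) 0 ∈ U := by
    rw [seg_sub hx hy]; exact sub_mem hxU hyU
  exact fun t ht => sub_eq_zero.1 <| (isForcedSol_zero_iff.1 hd).eq_zero_of_seg_eq_zero hr hL
    (Submodule.disjoint_def.1 hSU _ hS hU) t ht

end Uniqueness

section Existence

variable {d : ℕ} {r : ℝ}

lemma norm_apply_seg_le_bieleckiWeight {k : ℝ → ℝ} (hk : Continuous k) (hk₀ : ∀ s, 0 ≤ k s)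
    {A : Ph d r →L[ℝ] Rd d} {s : ℝ} (hA : ‖A‖ ≤ k s) {x g : ℝ → Rd d} (hx : Continuous x)
    {M : ℝ} (hM : 0 ≤ M) (hg : ∀ τ, ‖g τ‖ ≤ M) (hxg : ∀ τ, x τ = bieleckiWeight k τ • g τ) :
    ‖A (seg d r x hx s)‖ ≤ M * (k s * bieleckiWeight k s) := by
  have hE₀ := fun τ => (bieleckiWeight_pos k τ).le
  have hseg : ‖seg d r x hx s‖ ≤ bieleckiWeight k s * M :=
    norm_seg_le hx (mul_nonneg (hE₀ s) hM) fun τ _ hτ => by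
      rw [hxg, norm_smul, Real.norm_of_nonneg (hE₀ τ)]
      exact mul_le_mul (monotone_bieleckiWeight hk hk₀ hτ) (hg τ) (norm_nonneg _) (hE₀ s)
  calc ‖A (seg d r x hx s)‖ ≤ ‖A‖ * ‖seg d r x hx s‖ := A.le_opNorm _
    _ ≤ k s * (bieleckiWeight k s * M) :=
        mul_le_mul hA hseg (norm_nonneg _) ((norm_nonneg A).trans hA)
    _ = M * (k s * bieleckiWeight k s) := by ring

/-- Banach's fixed point theorem for the Picard map, conjugated by the Bielecki weight of
`k = ‖Lc‖ + ‖z‖` so that it acts on bounded functions. -/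
lemma exists_eq_integral_of_continuous {Lc : ℝ → (Ph d r →L[ℝ] Rd d)} (hLc : Continuous Lc)
    {z : ℝ → Rd d} (hz : Continuous z) :
    ∃ (x : ℝ → Rd d) (hx : Continuous x),
      ∀ t, x t = ∫ s in (0:ℝ)..max t 0, (Lc s (seg d r x hx s) + z s) := by
  set k : ℝ → ℝ := fun s => ‖Lc s‖ + ‖z s‖
  have hk : Continuous k := (Continuous.norm (E := Ph d r →L[ℝ] Rd d) hLc).add hz.norm
  have hk₀ : ∀ s, 0 ≤ k s := fun s => by positivity
  set E := bieleckiWeight k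
  have hEg : ∀ g : ℝ →ᵇ Rd d, Continuous fun τ => E τ • g τ := fun g =>
    (continuous_bieleckiWeight hk).smul g.continuous
  set F : (ℝ →ᵇ Rd d) → ℝ → Rd d := fun g s => Lc s (seg d r _ (hEg g) s) + z s
  have hF : ∀ g, Continuous (F g) := fun g => (hLc.clm_apply (continuous_seg (hEg g))).add hz
  have hFb : ∀ g s, 0 ≤ s → ‖F g s‖ ≤ (‖g‖ + 1) * (k s * E s) := fun g s hs => by
    have h₁ := norm_apply_seg_le_bieleckiWeight hk hk₀ (s := s)
      (le_add_of_nonneg_right (norm_nonneg _))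
      (hEg g) (norm_nonneg g) g.norm_coe_le_norm fun _ => rfl
    have h₂ : ‖z s‖ ≤ k s * E s := (le_add_of_nonneg_left (norm_nonneg (Lc s))).trans
      (le_mul_of_one_le_right (hk₀ s) (one_le_bieleckiWeight hk hk₀ hs))
    calc ‖F g s‖ ≤ ‖Lc s (seg d r _ (hEg g) s)‖ + ‖z s‖ := norm_add_le _ _
      _ ≤ ‖g‖ * (k s * E s) + k s * E s := add_le_add h₁ h₂
      _ = (‖g‖ + 1) * (k s * E s) := by ring
  have hFd : ∀ g h s, ‖F g s - F h s‖ ≤ dist g h * (k s * E s) := fun g h s => by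
    rw [add_sub_add_right_eq_sub, ← map_sub, ← seg_sub (hEg g) (hEg h)]
    exact norm_apply_seg_le_bieleckiWeight hk hk₀ (s := s) (le_add_of_nonneg_right (norm_nonneg _))
      ((hEg g).sub (hEg h)) (g := ⇑g - ⇑h) dist_nonneg
      (fun τ => by rw [Pi.sub_apply, ← dist_eq_norm]; exact g.dist_coe_le_dist τ)
      fun τ => (smul_sub _ _ _).symm
  let Φ : (ℝ →ᵇ Rd d) → (ℝ →ᵇ Rd d) := fun g =>
    .ofNormedAddCommGroup (fun t => (E t)⁻¹ • ∫ s in (0:ℝ)..max t 0, F g s)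
      (((continuous_bieleckiWeight hk).inv₀ fun t => (bieleckiWeight_pos k t).ne').smul
        ((intervalIntegral.continuous_primitive (hF g).intervalIntegrable 0).comp
          (continuous_id.max continuous_const)))
      ((‖g‖ + 1) / 2)
      (norm_inv_bieleckiWeight_smul_integral_le hk (by positivity) (hFb g))
  have hΦ : ContractingWith (1 / 2) Φ := by
    refine ⟨by rw [← NNReal.coe_lt_coe]; norm_num, LipschitzWith.of_dist_le_mul fun g h => ?_⟩
    refine (BoundedContinuousFunction.dist_le (by positivity)).2 fun t => ?_
    rw [dist_eq_norm]
    simp only [Φ, BoundedContinuousFunction.coe_ofNormedAddCommGroup]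
    rw [← smul_sub, ← intervalIntegral.integral_sub ((hF g).intervalIntegrable _ _)
      ((hF h).intervalIntegrable _ _)]
    simpa [div_eq_inv_mul] using norm_inv_bieleckiWeight_smul_integral_le hk
      dist_nonneg (fun s _ => hFd g h s) t
  set g := ContractingWith.fixedPoint Φ hΦ
  refine ⟨fun t => E t • g t, hEg g, fun t => ?_⟩
  have hfix : Φ g = g := ContractingWith.fixedPoint_isFixedPt hΦ
  have hg : g t = (E t)⁻¹ • ∫ s in (0:ℝ)..max t 0, F g s := congr($hfix.symm t)
  show E t • g t = _
  rw [hg, smul_inv_smul₀ (bieleckiWeight_pos k t).ne']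

lemma exists_isForcedSol {L : ℝ → (Ph d r →L[ℝ] Rd d)} (hL : ContinuousOn L (Ici 0))
    {z : ℝ → Rd d} (hz : ContinuousOn z (Ici 0)) :
    ∃ (x : ℝ → Rd d) (hx : Continuous x), IsForcedSol L z x hx := by
  obtain ⟨x, hx, hxe⟩ :=
    exists_eq_integral_of_continuous hL.continuous_comp_max_Ici hz.continuous_comp_max_Ici
  refine ⟨x, hx, (isForcedSol_iff_eq_integral hL hz).2 fun t ht => ?_⟩
  rw [hxe t, hxe 0, max_eq_left ht, max_self, intervalIntegral.integral_same, zero_add]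
  refine intervalIntegral.integral_congr fun s hs => ?_
  rw [uIcc_of_le ht] at hs
  simp only [max_eq_left hs.1]

end Existence

section Perron

variable {d : ℕ} {r : ℝ} {L : ℝ → (Ph d r →L[ℝ] Rd d)} {z : ℝ → Rd d}

/-- A solution `y` of the forced equation, rescaled so that `c • z` has norm at most `δ`, is a
`δ`-pseudo-solution of the homogeneous equation; a true solution shadowing it within `1` stays
within `1 / c` of `y` after rescaling back. -/
lemma exists_bounded_isForcedSol (hr : 0 ≤ r) (hL : ContinuousOn L (Ici 0))
    (hsh : Shadowable d r L) (hz : ContinuousOn z (Ici 0)) {B : ℝ}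
    (hB : ∀ t, 0 ≤ t → ‖z t‖ ≤ B) :
    ∃ (x : ℝ → Rd d) (hx : Continuous x), IsForcedSol L z x hx ∧
      ∃ M, ∀ τ, -r ≤ τ → ‖x τ‖ ≤ M := by
  obtain ⟨y, hy, hys⟩ := exists_isForcedSol hL hz
  obtain ⟨δ, hδ, hshad⟩ := hsh 1 one_pos
  have hB₀ : 0 ≤ B := (norm_nonneg _).trans (hB 0 le_rfl)
  set c := δ / (B + 1)
  have hc : 0 < c := by positivity
  have hcB : c * B ≤ δ := by
    rw [div_mul_eq_mul_div, div_le_iff₀ (by positivity)]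
    nlinarith
  obtain ⟨u, hu, hus, hclose⟩ := hshad (c • y) (fun t => c • (L t (seg d r y hy t) + z t))
    (hy.const_smul c)
    (((hL.clm_apply (continuous_seg hy).continuousOn).add hz).const_smul c)
    (fun t ht => (hys t ht).const_smul c) fun t ht => by
      rw [seg_smul c hy, map_smul, smul_add, add_sub_cancel_left, norm_smul,
        Real.norm_of_nonneg hc.le]
      exact (mul_le_mul_of_nonneg_left (hB t ht) hc.le).trans hcB
  have hws := hys.sub ((isForcedSol_zero_iff.2 hus).const_smul c⁻¹)
  rw [smul_zero, sub_zero] at hws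
  refine ⟨_, hy.sub (hu.const_smul c⁻¹), hws, c⁻¹,
    fun τ hτ => norm_le_of_norm_seg_le hr (hy.sub (hu.const_smul c⁻¹)) (fun t ht => ?_) hτ⟩
  have heq : seg d r (y - c⁻¹ • u) (hy.sub (hu.const_smul c⁻¹)) t
      = -(c⁻¹ • (seg d r u hu t - seg d r (c • y) (hy.const_smul c) t)) := by
    ext1 θ
    simp [seg, smul_sub, hc.ne']
  rw [heq, norm_neg, norm_smul, Real.norm_of_nonneg (inv_nonneg.2 hc.le)]
  simpa using mul_le_mul_of_nonneg_left (hclose t ht) (inv_nonneg.2 hc.le)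

lemma exists_bounded_isForcedSol_seg_mem (hr : 0 ≤ r) (hL : ContinuousOn L (Ici 0))
    {T : ℝ → ℝ → (Ph d r →L[ℝ] Ph d r)} (hT : IsSolOp d r L T) (hsh : Shadowable d r L)
    {U : Submodule ℝ (Ph d r)} (hSU : Codisjoint (stableSub d r T 0) U)
    (hz : ContinuousOn z (Ici 0)) {B : ℝ} (hB : ∀ t, 0 ≤ t → ‖z t‖ ≤ B) :
    ∃ (x : ℝ → Rd d) (hx : Continuous x), IsForcedSol L z x hx ∧ seg d r x hx 0 ∈ U ∧
      ∃ M, ∀ τ, -r ≤ τ → ‖x τ‖ ≤ M := by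
  obtain ⟨w, hw, hws, Mw, hMw⟩ := exists_bounded_isForcedSol hr hL hsh hz hB
  obtain ⟨ψS, ψU, ⟨Mψ, hMψ⟩, hψU, hsum⟩ :=
    Submodule.codisjoint_iff_exists_add_eq.1 hSU (seg d r w hw 0)
  obtain ⟨v, hv, hvs, hv₀, hvT⟩ := hT 0 le_rfl ψS
  have hMv : ∀ τ, -r ≤ τ → ‖v τ‖ ≤ Mψ :=
    fun τ hτ => norm_le_of_norm_seg_le hr hv (fun t ht => hvT t ht ▸ hMψ t ht) hτ
  have hxs := hws.sub (isForcedSol_zero_iff.2 hvs)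
  rw [sub_zero] at hxs
  refine ⟨w - v, hw.sub hv, hxs, ?_, Mw + Mψ, fun τ hτ =>
    (norm_sub_le _ _).trans (add_le_add (hMw τ hτ) (hMv τ hτ))⟩
  rw [seg_sub hw hv, hv₀, ← hsum, add_sub_cancel_left]
  exact hψU

end Perron

section ClosedGraph

variable {d : ℕ} {r : ℝ}

/-- The pairs `(z, x)` of the statement; `x` is extended to the left of `-r` by its value at `-r`
so that it is a bounded continuous function on `ℝ`. -/
def perronGraph (L : ℝ → (Ph d r →L[ℝ] Rd d)) (U : Submodule ℝ (Ph d r)) :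
    Submodule ℝ ((ℝ →ᵇ Rd d) × (ℝ →ᵇ Rd d)) where
  carrier := {p | IsForcedSol L p.1 p.2 p.2.continuous ∧ seg d r p.2 p.2.continuous 0 ∈ U ∧
    ∀ t, t ≤ -r → p.2 t = p.2 (-r)}
  add_mem' := fun ⟨h₁, h₂, h₃⟩ ⟨h₁', h₂', h₃'⟩ =>
    ⟨h₁.add h₁', add_mem h₂ h₂', fun t ht => by simp [h₃ t ht, h₃' t ht]⟩
  zero_mem' := ⟨isForcedSol_zero, zero_mem U, fun _ _ => rfl⟩
  smul_mem' := fun c _ ⟨h₁, h₂, h₃⟩ =>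
    ⟨h₁.const_smul c, U.smul_mem c h₂, fun t ht => by simp [h₃ t ht]⟩

variable {L : ℝ → (Ph d r →L[ℝ] Rd d)} {U : Submodule ℝ (Ph d r)}

lemma isClosed_perronGraph (hL : ContinuousOn L (Ici 0)) (hU : IsClosed (U : Set (Ph d r))) :
    IsClosed (perronGraph L U : Set ((ℝ →ᵇ Rd d) × (ℝ →ᵇ Rd d))) := by
  have hseg := continuous_seg_uncurry (r := r)
    (f := fun p : (ℝ →ᵇ Rd d) × (ℝ →ᵇ Rd d) => ⇑p.2)
    (continuous_eval.comp ((continuous_snd.comp continuous_fst).prodMk continuous_snd))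
  have hint : Continuous fun q : ((ℝ →ᵇ Rd d) × (ℝ →ᵇ Rd d)) × ℝ =>
      L (max q.2 0) (seg d r q.1.2 q.1.2.continuous q.2) + q.1.1 q.2 :=
    ((hL.continuous_comp_max_Ici.comp continuous_snd).clm_apply hseg).add
      (continuous_eval.comp ((continuous_fst.comp continuous_fst).prodMk continuous_snd))
  have hgraph : (perronGraph L U : Set ((ℝ →ᵇ Rd d) × (ℝ →ᵇ Rd d))) =
      (⋂ t ∈ Ici (0:ℝ), {p | p.2 t = p.2 0 +
        ∫ s in (0:ℝ)..t, (L (max s 0) (seg d r p.2 p.2.continuous s) + p.1 s)}) ∩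
      ((fun p => seg d r p.2 p.2.continuous 0) ⁻¹' U ∩ ⋂ t ∈ Iic (-r), {p | p.2 t = p.2 (-r)}) := by
    ext p
    simp only [perronGraph, Submodule.coe_set_mk, AddSubmonoid.coe_set_mk,
      AddSubsemigroup.coe_set_mk, mem_ofPred_eq, mem_inter_iff, mem_iInter, mem_preimage,
      SetLike.mem_coe, mem_Ici, mem_Iic,
      isForcedSol_iff_eq_integral hL p.1.continuous.continuousOn]
    refine and_congr (forall₂_congr fun t ht => ?_) Iff.rfl
    rw [intervalIntegral.integral_congr fun s hs => ?_]
    rw [uIcc_of_le ht] at hs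
    simp only [max_eq_left hs.1]
  rw [hgraph]
  refine (isClosed_biInter fun t _ => isClosed_eq ?_ ?_).inter
    ((hU.preimage (hseg.comp (continuous_id.prodMk continuous_const))).inter
      (isClosed_biInter fun t _ => isClosed_eq ?_ ?_))
  · exact (continuous_eval_const t).comp continuous_snd
  · exact ((continuous_eval_const 0).comp continuous_snd).add
      (intervalIntegral.continuous_parametric_intervalIntegral_of_continuous' hint 0 t)
  · exact (continuous_eval_const t).comp continuous_snd
  · exact (continuous_eval_const (-r)).comp continuous_snd

lemma existsUnique_mem_perronGraph (hr : 0 ≤ r) (hL : ContinuousOn L (Ici 0))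
    {T : ℝ → ℝ → (Ph d r →L[ℝ] Ph d r)} (hT : IsSolOp d r L T) (hsh : Shadowable d r L)
    (hSU : IsCompl (stableSub d r T 0) U) (ζ : ℝ →ᵇ Rd d) :
    ∃! ξ, (ζ, ξ) ∈ perronGraph L U := by
  obtain ⟨x, hx, hxs, hxU, M, hM⟩ := exists_bounded_isForcedSol_seg_mem hr hL hT hsh
    hSU.codisjoint ζ.continuous.continuousOn fun t _ => ζ.norm_coe_le_norm t
  have hxc : Continuous fun t => x (max t (-r)) := hx.comp (continuous_id.max continuous_const)
  have hclamp : ∀ τ, -r ≤ τ → x τ = x (max τ (-r)) := fun τ hτ => by rw [max_eq_left hτ]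
  have hxcs : IsForcedSol L ζ _ hxc := hxs.congr hr hclamp
  have hxcU : seg d r _ hxc 0 ∈ U := by
    rwa [← seg_congr (t := 0) hx hxc fun τ h₁ _ => hclamp τ (by linarith)]
  refine ⟨.ofNormedAddCommGroup _ hxc M fun t => hM _ (le_max_right _ _),
    ⟨hxcs, hxcU, fun t ht => ?_⟩, ?_⟩
  · simp [max_eq_right ht]
  · rintro ξ ⟨hξs, hξU, hξl⟩
    refine BoundedContinuousFunction.ext fun t => ?_
    have h := hξs.eq_of_seg_mem hr hL hT hSU.disjoint hxcs hξU hxcU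
      (fun τ _ => ξ.norm_coe_le_norm τ) (fun τ _ => hM _ (le_max_right _ _))
    rcases le_total (-r) t with ht | ht
    · exact h t ht
    · rw [hξl t ht, h (-r) le_rfl]
      simp [max_eq_right ht]

end ClosedGraph

theorem stmt8_general (d : ℕ) (r : ℝ) (hr : 0 ≤ r)
    (L : ℝ → (Ph d r →L[ℝ] Rd d)) (hL : ContinuousOn L (Set.Ici 0))
    (T : ℝ → ℝ → (Ph d r →L[ℝ] Ph d r))
    (hT : IsSolOp d r L T)
    (hsh : Shadowable d r L)
    (U : Submodule ℝ (Ph d r)) (hUfd : FiniteDimensional ℝ ↥U)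
    (hUcompl : IsCompl (stableSub d r T 0) U) :
    ∃ A, 0 < A ∧ ∀ z : ℝ → Rd d, ContinuousOn z (Set.Ici 0) →
      (∃ B, ∀ t, 0 ≤ t → ‖z t‖ ≤ B) →
      ∃ (x : ℝ → Rd d) (hx : Continuous x),
        seg d r x hx 0 ∈ U ∧
        (∃ B, ∀ t, -r ≤ t → ‖x t‖ ≤ B) ∧
        (∀ t, 0 ≤ t → HasDerivWithinAt x (L t (seg d r x hx t) + z t) (Set.Ici 0) t) ∧
        (∀ (x' : ℝ → Rd d) (hx' : Continuous x'),
          seg d r x' hx' 0 ∈ U → (∃ B, ∀ t, -r ≤ t → ‖x' t‖ ≤ B) →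
          (∀ t, 0 ≤ t → HasDerivWithinAt x' (L t (seg d r x' hx' t) + z t) (Set.Ici 0) t) →
          ∀ t, -r ≤ t → x' t = x t) ∧
        (∀ B, (∀ t, 0 ≤ t → ‖z t‖ ≤ B) → ∀ t, -r ≤ t → ‖x t‖ ≤ A * B) := by
  have hunique := existsUnique_mem_perronGraph hr hL hT hsh hUcompl
  obtain ⟨A, hA, hAG⟩ := exists_norm_snd_le_of_isClosed (perronGraph L U)
    (isClosed_perronGraph hL (Submodule.closed_of_finiteDimensional U)) hunique
  refine ⟨A, hA, fun z hz ⟨B₀, hB₀⟩ => ?_⟩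
  let ζ : ℝ →ᵇ Rd d := .ofNormedAddCommGroup _ hz.continuous_comp_max_Ici B₀
    fun t => hB₀ _ (le_max_right _ _)
  obtain ⟨ξ, hξG, -⟩ := hunique ζ
  have hξs : IsForcedSol L z ξ ξ.continuous :=
    hξG.1.congr_forcing fun t ht => by simp [ζ, max_eq_left ht]
  have hξU : seg d r ξ ξ.continuous 0 ∈ U := hξG.2.1
  have hξb : ∀ t, -r ≤ t → ‖ξ t‖ ≤ ‖ξ‖ := fun t _ => ξ.norm_coe_le_norm t
  refine ⟨ξ, ξ.continuous, hξU, ⟨‖ξ‖, hξb⟩, hξs, fun x' hx' hx'U ⟨B', hB'⟩ hx's => ?_,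
    fun B hB t _ => ?_⟩
  · exact IsForcedSol.eq_of_seg_mem hr hL hT hUcompl.disjoint (hx's : IsForcedSol L z x' hx')
      hξs hx'U hξU hB' hξb
  have hζ : ‖ζ‖ ≤ B := (BoundedContinuousFunction.norm_le ((norm_nonneg _).trans (hB 0 le_rfl))).2
    fun t => hB _ (le_max_right _ _)
  calc ‖ξ t‖ ≤ ‖ξ‖ := ξ.norm_coe_le_norm t
    _ ≤ A * ‖ζ‖ := hAG (ζ, ξ) hξG
    _ ≤ A * B := mul_le_mul_of_nonneg_left hζ hA.le

/-- If Eq. x'(t) = L(t)x_t is shadowable and C = 𝒮(0) ⊕ 𝒰 with 𝒰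
finite-dimensional, then for each bounded continuous z there is a unique
bounded continuous solution x of x' = L(t)x_t + z(t) with x_0 ∈ 𝒰, and
sup_{t ≥ -r} |x(t)| ≤ A · sup_{t ≥ 0} |z(t)| for a constant A independent of z. -/
theorem stmt8 (d : ℕ) (r : ℝ) (hr : 0 ≤ r)
    (L : ℝ → (Ph d r →L[ℝ] Rd d)) (hL : ContinuousOn L (Set.Ici 0))
    (T : ℝ → ℝ → (Ph d r →L[ℝ] Ph d r))
    (hT : IsSolOp d r L T) (hcoc : Cocycle d r T)
    (hsh : Shadowable d r L)
    (U : Submodule ℝ (Ph d r)) (hUfd : FiniteDimensional ℝ ↥U)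
    (hUcompl : IsCompl (stableSub d r T 0) U) :
    ∃ A, 0 < A ∧ ∀ z : ℝ → Rd d, ContinuousOn z (Set.Ici 0) →
      (∃ B, ∀ t, 0 ≤ t → ‖z t‖ ≤ B) →
      ∃ (x : ℝ → Rd d) (hx : Continuous x),
        seg d r x hx 0 ∈ U ∧
        (∃ B, ∀ t, -r ≤ t → ‖x t‖ ≤ B) ∧
        (∀ t, 0 ≤ t → HasDerivWithinAt x (L t (seg d r x hx t) + z t) (Set.Ici 0) t) ∧
        (∀ (x' : ℝ → Rd d) (hx' : Continuous x'),
          seg d r x' hx' 0 ∈ U → (∃ B, ∀ t, -r ≤ t → ‖x' t‖ ≤ B) →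
          (∀ t, 0 ≤ t → HasDerivWithinAt x' (L t (seg d r x' hx' t) + z t) (Set.Ici 0) t) →
          ∀ t, -r ≤ t → x' t = x t) ∧
        (∀ B, (∀ t, 0 ≤ t → ‖z t‖ ≤ B) → ∀ t, -r ≤ t → ‖x t‖ ≤ A * B) :=
  stmt8_general d r hr L hL T hT hsh U hUfd hUcompl

end
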